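/- Conjugation of Jordan–Wigner Majorana operators by the cyclic shift of qubits: let S be the unitary operator on H_N (N ≥ 2) determined by S(v_1 ⊗ v_2 ⊗ ⋯ ⊗ v_N) = v_N ⊗ v_1 ⊗ ⋯ ⊗ v_{N−1}. Then S γ_k S† = Z_1 γ_{k+2} for all 1 ≤ k ≤ 2N−2, while the last two Majorana operators acquire the total parity operator: S γ_{2N−1} S† = −Z_1 γ_1 P and S γ_{2N} S† = −Z_1 γ_2 P. -/

import Mathlib

/-!
The shift `S` is the permutation matrix of `cycShift`, so conjugation by `S` is the algebra
automorphism that relabels the sites and carries each single-site Pauli operator on site `k` to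
the same operator on site `k + 1`, cyclically. A Majorana operator `Z_1 ⋯ Z_{j-1} A_j`
(`A = X` or `Y`) is thus sent to `Z_2 ⋯ Z_j A_{j+1}`, which is `Z_1 γ_{k+2}` because `Z_1² = 1`.
For `j = N` the string wraps around to `Z_2 ⋯ Z_N A_1`; as `A_1` anticommutes with `Z_1` and
commutes with `Z_2, …, Z_N`, this is `-Z_1 A_1 P`.
-/

open Complex Matrix

noncomputable section

/-- Computational basis labels for `L` qubits: bit strings `b : Fin L → Fin 2`. -/
abbrev QBasis (L : ℕ) := Fin L → Fin 2

/-- State vectors of `L` qubits (the Hilbert space `H_L = (ℂ²)^{⊗L}`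
in its computational basis coordinates). -/
abbrev QVec (L : ℕ) := QBasis L → ℂ

/-- Operators on `L` qubits, written as matrices in the computational basis. -/
abbrev QOp (L : ℕ) := Matrix (QBasis L) (QBasis L) ℂ

/-- The inner product `⟨φ, ψ⟩`, conjugate-linear in the first argument. -/
def qInner {L : ℕ} (φ ψ : QVec L) : ℂ := ∑ b, (starRingEnd ℂ) (φ b) * ψ b

/-- `+1` for bit `0`, `-1` for bit `1`. -/
def bitSign (x : Fin 2) : ℂ := if x = 0 then 1 else -1

/-- Flip the `k`-th bit of a bit string. -/
def flipBit {L : ℕ} (k : Fin L) (b : QBasis L) : QBasis L :=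
  Function.update b k (1 - b k)

/-- Pauli `X` on the (1-based) site `k`; the identity if `k` is out of range. -/
def siteX (L : ℕ) (k : ℕ) : QOp L :=
  if h : 1 ≤ k ∧ k ≤ L then
    Matrix.of fun b c => if c = flipBit ⟨k - 1, by omega⟩ b then 1 else 0
  else 1

/-- Pauli `Y` on the (1-based) site `k`; the identity if `k` is out of range. -/
def siteY (L : ℕ) (k : ℕ) : QOp L :=
  if h : 1 ≤ k ∧ k ≤ L then
    Matrix.of fun b c =>
      if c = flipBit ⟨k - 1, by omega⟩ b then -Complex.I * bitSign (b ⟨k - 1, by omega⟩)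
      else 0
  else 1

/-- Pauli `Z` on the (1-based) site `k`; the identity if `k` is out of range. -/
def siteZ (L : ℕ) (k : ℕ) : QOp L :=
  if h : 1 ≤ k ∧ k ≤ L then
    Matrix.diagonal fun b => bitSign (b ⟨k - 1, by omega⟩)
  else 1

/-- The ordered operator product `f 1 * f 2 * ⋯ * f n`. -/
def opProd (L : ℕ) (f : ℕ → QOp L) (n : ℕ) : QOp L :=
  ((List.range n).map fun i => f (i + 1)).prod

/-- The Jordan–Wigner Majorana operator `γ_m` (1-based, `1 ≤ m ≤ 2L`):
`γ_{2k-1} = Z_1 ⋯ Z_{k-1} X_k` and `γ_{2k} = Z_1 ⋯ Z_{k-1} Y_k`. -/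
def majorana (L : ℕ) (m : ℕ) : QOp L :=
  opProd L (siteZ L) ((m + 1) / 2 - 1) *
    (if m % 2 = 1 then siteX L ((m + 1) / 2) else siteY L ((m + 1) / 2))

/-- The total parity operator `P = Z_1 Z_2 ⋯ Z_L`. -/
def totalParity (L : ℕ) : QOp L := opProd L (siteZ L) L


/-- The cyclic shift of a bit string: `(cycShift b)_1 = b_N` and
`(cycShift b)_j = b_{j-1}` for `j ≥ 2` (0-based: `j ↦ b (j - 1)` mod `N`). -/
def cycShift {N : ℕ} (b : QBasis N) : QBasis N := fun j => b ((finRotate N).symm j)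

lemma val_finRotate {N : ℕ} (i : Fin N) : (finRotate N i : ℕ) = (i + 1) % N := by
  obtain ⟨n, rfl⟩ : ∃ n, N = n + 1 := ⟨N - 1, by have := i.pos; omega⟩
  rw [finRotate_apply, Fin.val_add, Fin.val_one']
  simp

lemma flipBit_arrowCongr {L M : ℕ} (e : Fin L ≃ Fin M) (k : Fin L) (b : QBasis L) :
    e.arrowCongr (Equiv.refl _) (flipBit k b) = flipBit (e k) (e.arrowCongr (Equiv.refl _) b) := by
  funext i
  simp [flipBit, Equiv.arrowCongr_apply, Function.update_apply, Equiv.symm_apply_eq]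

def shiftEquiv (N : ℕ) : QBasis N ≃ QBasis N := (finRotate N).arrowCongr (Equiv.refl _)

lemma shiftEquiv_apply {N : ℕ} (b : QBasis N) : shiftEquiv N b = cycShift b := rfl

def shiftConj (N : ℕ) : QOp N ≃ₐ[ℂ] QOp N := reindexAlgEquiv ℂ ℂ (shiftEquiv N)

lemma shiftConj_apply {N : ℕ} (M : QOp N) (b c : QBasis N) :
    shiftConj N M b c = M ((shiftEquiv N).symm b) ((shiftEquiv N).symm c) := rfl

lemma mul_mul_conjTranspose_eq_shiftConj {N : ℕ} {S : QOp N}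
    (hS : ∀ b : QBasis N, S *ᵥ Pi.single b 1 = Pi.single (cycShift b) 1) (M : QOp N) :
    S * M * Sᴴ = shiftConj N M := by
  have hS' : ∀ b c, S b c = if (shiftEquiv N).symm b = c then 1 else 0 := fun b c => by
    have h := congrFun (hS c) b
    simp only [mulVec_single_one, col_apply, Pi.single_apply] at h
    simp only [h, Equiv.symm_apply_eq, shiftEquiv_apply]
  ext b c
  simp [shiftConj_apply, mul_apply, conjTranspose_apply, hS']

lemma bitSign_mul_self (x : Fin 2) : bitSign x * bitSign x = 1 := by
  fin_cases x <;> simp [bitSign]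

lemma bitSign_one_sub (x : Fin 2) : bitSign (1 - x) = -bitSign x := by
  fin_cases x <;> simp [bitSign]

section Sites

variable {N : ℕ}

lemma siteX_succ (i : Fin N) :
    siteX N (i + 1) = of fun b c => if c = flipBit i b then 1 else 0 := by
  rw [siteX, dif_pos ⟨by omega, i.isLt⟩]
  rfl

lemma siteZ_succ (i : Fin N) : siteZ N (i + 1) = diagonal fun b => bitSign (b i) := by
  rw [siteZ, dif_pos ⟨by omega, i.isLt⟩]
  rfl

lemma siteY_succ (i : Fin N) :
    siteY N (i + 1) = (-I) • (siteZ N (i + 1) * siteX N (i + 1)) := by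
  ext b c
  rw [siteY, dif_pos ⟨by omega, i.isLt⟩, siteZ_succ, siteX_succ]
  simp [diagonal_mul]

lemma siteZ_mul_self (k : ℕ) : siteZ N k * siteZ N k = 1 := by
  unfold siteZ
  split_ifs
  · rw [diagonal_mul_diagonal, ← diagonal_one]
    simp only [bitSign_mul_self]
  · exact one_mul 1

lemma commute_siteZ_siteZ (k l : ℕ) : Commute (siteZ N k) (siteZ N l) := by
  unfold siteZ
  split_ifs
  · simp only [Commute, SemiconjBy, diagonal_mul_diagonal, mul_comm]
  all_goals simp

lemma siteX_mul_siteZ (i : Fin N) :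
    siteX N (i + 1) * siteZ N (i + 1) = -(siteZ N (i + 1) * siteX N (i + 1)) := by
  ext b c
  simp only [siteZ_succ, siteX_succ, mul_diagonal, of_apply]
  by_cases hc : c = flipBit i b
  · simp [hc, flipBit, bitSign_one_sub]
  · simp [hc]

lemma commute_siteZ_siteX {i j : Fin N} (hij : i ≠ j) :
    Commute (siteZ N (i + 1)) (siteX N (j + 1)) := by
  ext b c
  simp only [siteZ_succ, siteX_succ, diagonal_mul, mul_diagonal, of_apply]
  by_cases hc : c = flipBit j b
  · simp [hc, flipBit, Function.update_of_ne hij]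
  · simp [hc]

lemma siteY_mul_siteZ (i : Fin N) :
    siteY N (i + 1) * siteZ N (i + 1) = -(siteZ N (i + 1) * siteY N (i + 1)) := by
  rw [siteY_succ, mul_smul_comm, smul_mul_assoc, ← smul_neg, mul_assoc, siteX_mul_siteZ,
    mul_neg]

lemma commute_siteZ_siteY {i j : Fin N} (hij : i ≠ j) :
    Commute (siteZ N (i + 1)) (siteY N (j + 1)) := by
  rw [siteY_succ]
  exact ((commute_siteZ_siteZ _ _).mul_right (commute_siteZ_siteX hij)).smul_right _

end Sites

section Shift

variable {N : ℕ}

lemma shiftConj_siteX (i : Fin N) :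
    shiftConj N (siteX N (i + 1)) = siteX N (finRotate N i + 1) := by
  ext b c
  simp only [shiftConj_apply, siteX_succ, of_apply, Equiv.symm_apply_eq, shiftEquiv,
    flipBit_arrowCongr, Equiv.apply_symm_apply]

lemma shiftConj_siteZ (i : Fin N) :
    shiftConj N (siteZ N (i + 1)) = siteZ N (finRotate N i + 1) := by
  rw [siteZ_succ, siteZ_succ, shiftConj, coe_reindexAlgEquiv, reindex_apply,
    submatrix_diagonal_equiv]
  rfl

lemma shiftConj_siteY (i : Fin N) :
    shiftConj N (siteY N (i + 1)) = siteY N (finRotate N i + 1) := by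
  rw [siteY_succ, siteY_succ, map_smul, map_mul, shiftConj_siteZ, shiftConj_siteX]

/-- In the 1-based site numbering, `k % N + 1` is the site after `k`, with `N` followed by `1`. -/
def IsShiftCovariant (A : ℕ → QOp N) : Prop :=
  ∀ k, 1 ≤ k → k ≤ N → shiftConj N (A k) = A (k % N + 1)

lemma isShiftCovariant_of_fin {A : ℕ → QOp N}
    (hA : ∀ i : Fin N, shiftConj N (A (i + 1)) = A (finRotate N i + 1)) : IsShiftCovariant A := by
  intro k hk1 hkN
  simpa only [val_finRotate, Nat.sub_add_cancel hk1] using hA ⟨k - 1, by omega⟩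

end Shift

section Strings

variable {L : ℕ}

lemma opProd_succ' (f : ℕ → QOp L) (n : ℕ) :
    opProd L f (n + 1) = f 1 * opProd L (fun i => f (i + 1)) n := by
  simp [opProd, List.range_succ_eq_map, List.map_map, Function.comp_def]

lemma opProd_congr {f g : ℕ → QOp L} {n : ℕ} (h : ∀ i, 1 ≤ i → i ≤ n → f i = g i) :
    opProd L f n = opProd L g n := by
  unfold opProd
  congr 1
  refine List.map_congr_left fun i hi => h _ (by omega) ?_
  simp only [List.mem_range] at hi
  omega

lemma map_opProd {F : Type*} [FunLike F (QOp L) (QOp L)] [MonoidHomClass F (QOp L) (QOp L)]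
    (φ : F) (f : ℕ → QOp L) (n : ℕ) : φ (opProd L f n) = opProd L (fun i => φ (f i)) n := by
  simp [opProd, map_list_prod, List.map_map, Function.comp_def]

lemma commute_opProd_left {f : ℕ → QOp L} {n : ℕ} {M : QOp L}
    (h : ∀ i, 1 ≤ i → i ≤ n → Commute (f i) M) : Commute (opProd L f n) M := by
  refine Commute.list_prod_left _ _ fun x hx => ?_
  obtain ⟨i, hi, rfl⟩ := List.mem_map.mp hx
  exact h _ (by omega) (by simpa using hi)

end Strings

section JordanWigner

variable {N : ℕ}

def jwString (N : ℕ) (A : ℕ → QOp N) (j : ℕ) : QOp N := opProd N (siteZ N) (j - 1) * A j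

lemma jwString_one (A : ℕ → QOp N) : jwString N A 1 = A 1 := one_mul _

lemma majorana_of_odd {m : ℕ} (hm : m % 2 = 1) :
    majorana N m = jwString N (siteX N) ((m + 1) / 2) := by
  rw [majorana, if_pos hm, jwString]

lemma majorana_of_even {m : ℕ} (hm : m % 2 = 0) :
    majorana N m = jwString N (siteY N) ((m + 1) / 2) := by
  rw [majorana, if_neg (by omega), jwString]

lemma shiftConj_opProd_siteZ {n : ℕ} (hn : n < N) :
    shiftConj N (opProd N (siteZ N) n) = opProd N (fun i => siteZ N (i + 1)) n := by
  rw [map_opProd]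
  refine opProd_congr fun i hi1 hin => ?_
  rw [isShiftCovariant_of_fin shiftConj_siteZ i hi1 (by omega), Nat.mod_eq_of_lt (by omega)]

lemma shiftConj_jwString {A : ℕ → QOp N} (hA : IsShiftCovariant A) {j : ℕ} (hj1 : 1 ≤ j)
    (hjN : j < N) : shiftConj N (jwString N A j) = siteZ N 1 * jwString N A (j + 1) := by
  calc shiftConj N (jwString N A j)
      = opProd N (fun i => siteZ N (i + 1)) (j - 1) * A (j + 1) := by
        rw [jwString, map_mul, shiftConj_opProd_siteZ (by omega), hA j hj1 hjN.le,
          Nat.mod_eq_of_lt hjN]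
    _ = siteZ N 1 * (siteZ N 1 * opProd N (fun i => siteZ N (i + 1)) (j - 1)) * A (j + 1) := by
        rw [← mul_assoc, siteZ_mul_self, one_mul]
    _ = siteZ N 1 * jwString N A (j + 1) := by
        rw [← opProd_succ', Nat.sub_add_cancel hj1, mul_assoc, jwString, Nat.add_sub_cancel]

lemma shiftConj_jwString_last {A : ℕ → QOp N} (hN : 0 < N) (hA : IsShiftCovariant A)
    (hanti : A 1 * siteZ N 1 = -(siteZ N 1 * A 1))
    (hcomm : ∀ i : Fin N, i ≠ ⟨0, hN⟩ → Commute (siteZ N (i + 1)) (A 1)) :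
    shiftConj N (jwString N A N) = -(siteZ N 1 * jwString N A 1 * totalParity N) := by
  set Q := opProd N (fun i => siteZ N (i + 1)) (N - 1)
  have hP : totalParity N = siteZ N 1 * Q := by
    rw [totalParity, ← opProd_succ', Nat.sub_add_cancel hN]
  have hQ : Commute Q (A 1) := commute_opProd_left fun i hi1 hiN =>
    hcomm ⟨i, by omega⟩ (by simp only [ne_eq, Fin.mk.injEq]; omega)
  calc shiftConj N (jwString N A N)
      = Q * A 1 := by
        rw [jwString, map_mul, shiftConj_opProd_siteZ (by omega), hA N hN le_rfl, Nat.mod_self]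
    _ = -(siteZ N 1 * (A 1 * siteZ N 1)) * Q := by
        rw [hQ.eq, hanti, mul_neg, neg_neg, ← mul_assoc, siteZ_mul_self, one_mul]
    _ = -(siteZ N 1 * jwString N A 1 * totalParity N) := by
        rw [hP, jwString_one]
        simp only [mul_assoc, neg_mul]

lemma shiftConj_majorana {k : ℕ} (hk1 : 1 ≤ k) (hk2 : k ≤ 2 * N - 2) :
    shiftConj N (majorana N k) = siteZ N 1 * majorana N (k + 2) := by
  have hj : (k + 2 + 1) / 2 = (k + 1) / 2 + 1 := by omega
  rcases Nat.mod_two_eq_zero_or_one k with hk | hk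
  · rw [majorana_of_even hk, majorana_of_even (by omega), hj]
    exact shiftConj_jwString (isShiftCovariant_of_fin shiftConj_siteY) (by omega) (by omega)
  · rw [majorana_of_odd hk, majorana_of_odd (by omega), hj]
    exact shiftConj_jwString (isShiftCovariant_of_fin shiftConj_siteX) (by omega) (by omega)

lemma shiftConj_majorana_two_mul_sub_one (hN : 0 < N) :
    shiftConj N (majorana N (2 * N - 1)) = -(siteZ N 1 * majorana N 1 * totalParity N) := by
  rw [majorana_of_odd (by omega), majorana_of_odd rfl, show (2 * N - 1 + 1) / 2 = N by omega]
  exact shiftConj_jwString_last hN (isShiftCovariant_of_fin shiftConj_siteX)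
    (siteX_mul_siteZ ⟨0, hN⟩) fun i hi => commute_siteZ_siteX hi

lemma shiftConj_majorana_two_mul (hN : 0 < N) :
    shiftConj N (majorana N (2 * N)) = -(siteZ N 1 * majorana N 2 * totalParity N) := by
  rw [majorana_of_even (by omega), majorana_of_even rfl, show (2 * N + 1) / 2 = N by omega]
  exact shiftConj_jwString_last hN (isShiftCovariant_of_fin shiftConj_siteY)
    (siteY_mul_siteZ ⟨0, hN⟩) fun i hi => commute_siteZ_siteY hi

end JordanWigner

/-- let `S` be the (unitary) operator on `N` qubits determined by
`S (v_1 ⊗ v_2 ⊗ ⋯ ⊗ v_N) = v_N ⊗ v_1 ⊗ ⋯ ⊗ v_{N-1}`, i.e. sending each basis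
vector `|b⟩` to `|cycShift b⟩`.  Then `S γ_k S† = Z_1 γ_{k+2}` for `1 ≤ k ≤ 2N−2`,
while `S γ_{2N−1} S† = −Z_1 γ_1 P` and `S γ_{2N} S† = −Z_1 γ_2 P`. -/
theorem cyclic_shift_conjugation (N : ℕ) (hN : 2 ≤ N) (S : QOp N)
    (hS : ∀ b : QBasis N, S *ᵥ Pi.single b 1 = Pi.single (cycShift b) 1) :
    (∀ k : ℕ, 1 ≤ k → k ≤ 2 * N - 2 →
      S * majorana N k * Sᴴ = siteZ N 1 * majorana N (k + 2)) ∧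
    S * majorana N (2 * N - 1) * Sᴴ = -(siteZ N 1 * majorana N 1 * totalParity N) ∧
    S * majorana N (2 * N) * Sᴴ = -(siteZ N 1 * majorana N 2 * totalParity N) := by
  simp only [mul_mul_conjTranspose_eq_shiftConj hS]
  exact ⟨fun k hk1 hk2 => shiftConj_majorana hk1 hk2,
    shiftConj_majorana_two_mul_sub_one (by omega), shiftConj_majorana_two_mul (by omega)⟩

end
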